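/- For all natural numbers n and m ≥ 1 and every real number a with a ≠ 0, β_{n+m−1}^{(n,m)}(a) = a^{n+1} (1−a)^{m−1} · ((1/2) · (1/2)_{n+m−1}) / ((1/2)_n (1/2)_m) · ( C(n+m+1, 2) − C(n+m+1, 1)·C(n, 1)·a^{−1} + C(n+1, 2)·a^{−2} ), where C denotes the usual binomial coefficient and a^{−1}, a^{−2} are powers of the nonzero real a. -/

import Mathlib

open Finset

/-- The Bessel polynomial `q_n`, normalized so that `q_n(0) = 1`. -/
noncomputable def besselQ (n : ℕ) (u : ℝ) : ℝ :=
  ∑ k ∈ Finset.range (n + 1),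
    ((n.factorial : ℝ) * (2 * n - k).factorial * 2 ^ k) /
      ((2 * n).factorial * (n - k).factorial * k.factorial) * u ^ k

/-- The Pochhammer symbol `(x)_j = x (x+1) ⋯ (x+j-1)`. -/
noncomputable def poch (x : ℝ) (j : ℕ) : ℝ := ∏ i ∈ Finset.range j, (x + i)

/-- Generalized binomial coefficient with integer (possibly negative) upper entry. -/
noncomputable def gbinom (z : ℤ) (j : ℕ) : ℝ :=
  (∏ i ∈ Finset.range j, ((z : ℝ) - i)) / j.factorial

/-!
Both sides of the linearization identity are polynomials in `u`; compare their coefficients of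
`u ^ (n + m)` and `u ^ (n + m - 1)`. The Bessel polynomial `q_k` has leading coefficient
`1 / (2 ^ k (1/2)_k)` and next coefficient `C(k + 1, 2)` times that, so the top coefficient
determines `β_{n+m}`, after which the next one is linear in `β_{n+m-1}`.
-/

open Polynomial

namespace Polynomial

variable {R : Type*} [CommRing R] {f g : R[X]} {d e : ℕ}

theorem coeff_mul_add_add_one_of_natDegree_le (hf : f.natDegree ≤ d + 1)
    (hg : g.natDegree ≤ e + 1) :
    (f * g).coeff (d + e + 1) = f.coeff d * g.coeff (e + 1) + f.coeff (d + 1) * g.coeff e := by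
  rw [coeff_mul, Finset.sum_eq_add_of_mem (d, e + 1) (d + 1, e) (by simp; omega) (by simp; omega)
    (by simp)]
  rintro ⟨i, j⟩ hij hne
  rw [HasAntidiagonal.mem_antidiagonal] at hij
  rcases le_or_gt i (d + 1) with hi | hi
  · rw [coeff_eq_zero_of_natDegree_lt (hg.trans_lt (by grind)), mul_zero]
  · rw [coeff_eq_zero_of_natDegree_lt (hf.trans_lt hi), zero_mul]

/-- `(f * X).coeff d` is `f.coeff (d - 1)`, except that it vanishes at `d = 0`. -/
theorem coeff_mul_add_of_natDegree_le (hf : f.natDegree ≤ d) (hg : g.natDegree ≤ e + 1) :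
    (f * g).coeff (d + e) = f.coeff d * g.coeff e + (f * X).coeff d * g.coeff (e + 1) := by
  have hfX : (f * X).natDegree ≤ d + 1 := natDegree_mul_le.trans (add_le_add hf natDegree_X_le)
  rw [← coeff_mul_X (f * g), mul_right_comm, coeff_mul_add_add_one_of_natDegree_le hfX hg,
    coeff_mul_X]
  ring

theorem coeff_comp_C_mul_X_mul_X_mul (f : R[X]) (r : R) (d : ℕ) :
    ((f.comp (C r * X)) * X).coeff d * r = (f * X).coeff d * r ^ d := by
  cases d with
  | zero => simp
  | succ d => simp [coeff_mul_X, pow_succ, mul_assoc]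

theorem natDegree_comp_C_mul_X_le (r : R) (hf : f.natDegree ≤ d) :
    (f.comp (C r * X)).natDegree ≤ d :=
  natDegree_le_iff_coeff_eq_zero.2 fun i hi => by
    simp [coeff_eq_zero_of_natDegree_lt (hf.trans_lt hi)]

end Polynomial

noncomputable def besselCoeff (n k : ℕ) : ℝ :=
  ((n.factorial : ℝ) * (2 * n - k).factorial * 2 ^ k) /
    ((2 * n).factorial * (n - k).factorial * k.factorial)

noncomputable def besselPoly (n : ℕ) : ℝ[X] :=
  ∑ k ∈ range (n + 1), C (besselCoeff n k) * X ^ k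

theorem eval_besselPoly (n : ℕ) (u : ℝ) : (besselPoly n).eval u = besselQ n u := by
  simp [besselPoly, besselQ, besselCoeff, eval_finsetSum]

theorem natDegree_besselPoly_le (n : ℕ) : (besselPoly n).natDegree ≤ n :=
  natDegree_sum_le_of_forall_le _ _ fun k hk =>
    (natDegree_C_mul_X_pow_le _ k).trans (Nat.le_of_lt_succ (mem_range.1 hk))

theorem coeff_besselPoly {n k : ℕ} (hk : k ≤ n) : (besselPoly n).coeff k = besselCoeff n k := by
  simp [besselPoly, Nat.lt_succ_of_le hk]

theorem poch_one_half (k : ℕ) : poch (1 / 2) k = (2 * k).factorial / (4 ^ k * k.factorial) := by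
  induction k with
  | zero => simp [poch]
  | succ k ih =>
    rw [poch, prod_range_succ, ← poch, ih, Nat.mul_succ, Nat.factorial_succ, Nat.factorial_succ,
      Nat.factorial_succ]
    push_cast
    field_simp
    ring

theorem poch_one_half_pos (k : ℕ) : 0 < poch (1 / 2) k :=
  prod_pos fun i _ => by positivity

theorem besselCoeff_self (k : ℕ) : besselCoeff k k = (2 ^ k * poch (1 / 2) k)⁻¹ := by
  rw [besselCoeff, poch_one_half, two_mul, Nat.add_sub_cancel, Nat.sub_self,
    show (4 : ℝ) ^ k = 2 ^ k * 2 ^ k by rw [← mul_pow]; norm_num]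
  field_simp
  ring

theorem besselCoeff_succ_self (k : ℕ) :
    besselCoeff (k + 1) k = (k + 2).choose 2 * besselCoeff (k + 1) (k + 1) := by
  rw [besselCoeff, besselCoeff, show 2 * (k + 1) - k = k + 2 by omega,
    show 2 * (k + 1) - (k + 1) = k + 1 by omega, Nat.add_sub_cancel_left, Nat.sub_self,
    Nat.cast_choose_two, Nat.factorial_succ (k + 1), Nat.factorial_succ k]
  push_cast
  field_simp
  ring

theorem coeff_besselPoly_mul_X_self (k : ℕ) :
    (besselPoly k * X).coeff k = (k + 1).choose 2 * (besselPoly k).coeff k := by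
  cases k with
  | zero => simp
  | succ k =>
    rw [coeff_mul_X, coeff_besselPoly k.le_succ, coeff_besselPoly le_rfl, besselCoeff_succ_self]

theorem besselPoly_comp_mul_comp_eq_sum {n m N : ℕ} {a b : ℝ} {β : ℕ → ℝ}
    (h : ∀ u, besselQ n (a * u) * besselQ m (b * u) =
      ∑ k ∈ range (N + 1), β k * besselQ k u) :
    (besselPoly n).comp (C a * X) * (besselPoly m).comp (C b * X) =
      ∑ k ∈ range (N + 1), C (β k) * besselPoly k :=
  Polynomial.funext fun u => by
    simp [eval_finsetSum, eval_besselPoly, h]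

theorem coeff_sum_C_mul_besselPoly_self (β : ℕ → ℝ) (N : ℕ) :
    (∑ k ∈ range (N + 1), C (β k) * besselPoly k).coeff N = β N * besselCoeff N N := by
  rw [finsetSum_coeff, sum_eq_single_of_mem N (by simp), coeff_C_mul, coeff_besselPoly le_rfl]
  intro k hk hkN
  rw [coeff_C_mul, coeff_eq_zero_of_natDegree_lt ((natDegree_besselPoly_le k).trans_lt
    (by simp at hk; omega)), mul_zero]

theorem coeff_sum_C_mul_besselPoly_pred (β : ℕ → ℝ) (N : ℕ) :
    (∑ k ∈ range (N + 2), C (β k) * besselPoly k).coeff N =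
      β N * besselCoeff N N + β (N + 1) * ((N + 2).choose 2 * besselCoeff (N + 1) (N + 1)) := by
  rw [finsetSum_coeff, sum_eq_add_of_mem N (N + 1) (by simp) (by simp) (by simp), coeff_C_mul,
    coeff_C_mul, coeff_besselPoly le_rfl, coeff_besselPoly N.le_succ, besselCoeff_succ_self]
  intro k hk hkN
  rw [coeff_C_mul, coeff_eq_zero_of_natDegree_lt ((natDegree_besselPoly_le k).trans_lt
    (by simp at hk; omega)), mul_zero]

theorem besselCoeff_self_ne_zero (k : ℕ) : besselCoeff k k ≠ 0 := by
  rw [besselCoeff_self]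
  have := poch_one_half_pos k
  positivity

theorem linearization_coeff_pred_eq {n m : ℕ} {a b : ℝ} {β : ℕ → ℝ}
    (h : ∀ u, besselQ n (a * u) * besselQ (m + 1) (b * u) =
      ∑ k ∈ range (n + m + 2), β k * besselQ k u) :
    β (n + m) * (besselCoeff (n + m) (n + m) * a) =
      besselCoeff n n * besselCoeff (m + 1) (m + 1) * a ^ n * b ^ m *
        ((n + 1).choose 2 * b + (m + 2).choose 2 * a - (n + m + 2).choose 2 * a * b) := by
  have hpq := besselPoly_comp_mul_comp_eq_sum h
  have hp := natDegree_comp_C_mul_X_le a (natDegree_besselPoly_le n)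
  have hq := natDegree_comp_C_mul_X_le b (natDegree_besselPoly_le (m + 1))
  have htop := congrArg (coeff · (n + (m + 1))) hpq
  have hsub := congrArg (coeff · (n + m)) hpq
  have hpX := coeff_comp_C_mul_X_mul_X_mul (besselPoly n) a n
  rw [coeff_mul_add_eq_of_natDegree_le hp hq, ← add_assoc,
    coeff_sum_C_mul_besselPoly_self] at htop
  simp only [coeff_mul_add_of_natDegree_le hp hq, coeff_sum_C_mul_besselPoly_pred] at hsub
  simp only [comp_C_mul_X_coeff, coeff_besselPoly le_rfl, coeff_besselPoly m.le_succ,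
    besselCoeff_succ_self, coeff_besselPoly_mul_X_self] at htop hsub hpX
  -- `htop` eliminates `β (n + m + 1)` and `hpX` the subleading coefficient of `q_n (a u)`.
  linear_combination (-a) * hsub + besselCoeff (m + 1) (m + 1) * b ^ (m + 1) * hpX +
    a * (n + m + 2).choose 2 * htop

theorem bessel_linearization_second_coefficient
    (n m : ℕ) (hm : 1 ≤ m) (a : ℝ) (ha : a ≠ 0)
    (β : ℕ → ℝ)
    (hβ : ∀ u : ℝ, besselQ n (a * u) * besselQ m ((1 - a) * u) =
      ∑ k ∈ Finset.range (n + m + 1), β k * besselQ k u) :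
    β (n + m - 1) = a ^ (n + 1) * (1 - a) ^ (m - 1) *
      ((1/2) * poch (1/2) (n + m - 1)) / (poch (1/2) n * poch (1/2) m) *
      (((n + m + 1).choose 2 : ℝ) -
        ((n + m + 1).choose 1 : ℝ) * (n.choose 1 : ℝ) * a ^ (-1 : ℤ) +
        ((n + 1).choose 2 : ℝ) * a ^ (-2 : ℤ)) := by
  obtain ⟨m, rfl⟩ : ∃ k, m = k + 1 := ⟨m - 1, by omega⟩
  have key := linearization_coeff_pred_eq (by simpa only [← add_assoc] using hβ)
  rw [show n + (m + 1) - 1 = n + m by omega, Nat.add_sub_cancel,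
    eq_div_of_mul_eq (mul_ne_zero (besselCoeff_self_ne_zero _) ha) key]
  simp only [besselCoeff_self, zpow_neg, zpow_one, zpow_two, Nat.choose_one_right,
    Nat.cast_choose_two]
  have := poch_one_half_pos n
  have := poch_one_half_pos (m + 1)
  have := poch_one_half_pos (n + m)
  push_cast
  field_simp
  ring
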